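/- arXiv:2105.12632 — 3 statements merged into one kernel-verified Lean document; each statement's English description precedes it below -/
import Mathlib

section
/- Let M, a, Q ∈ ℝ with M² ≥ a² + Q², let Δ(r) = r² − 2Mr + a² + Q², and let Ñ(r,θ) = √(Δ(r))·sin θ. Then on the domain {r > M + √(M² − a² − Q²), 0 < θ < π}, Ñ satisfies the equation ∂/∂r(√Δ · ∂Ñ/∂r) + ∂/∂θ(Δ^{−1/2} · ∂Ñ/∂θ) = 0. -/
open Real

/-- The 2+1-dimensional Kerr–Newman lapse Ñ = √Δ · sin θ is harmonic with respect
to the quotient 2-metric: ∂r(√Δ ∂r Ñ) + ∂θ(Δ^{−1/2} ∂θ Ñ) = 0 on the domain of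
outer communications minus the axes. -/
theorem kerrNewman_lapse_harmonic (M a Q : ℝ) (h : M ^ 2 ≥ a ^ 2 + Q ^ 2)
    (Δ : ℝ → ℝ) (hΔ : ∀ r, Δ r = r ^ 2 - 2 * M * r + a ^ 2 + Q ^ 2)
    (N : ℝ → ℝ → ℝ) (hN : ∀ r θ, N r θ = Real.sqrt (Δ r) * Real.sin θ) :
    ∀ r θ : ℝ, M + Real.sqrt (M ^ 2 - a ^ 2 - Q ^ 2) < r → 0 < θ → θ < π →
      deriv (fun r' => Real.sqrt (Δ r') * deriv (fun r'' => N r'' θ) r') r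
        + deriv (fun θ' => (Real.sqrt (Δ r))⁻¹ * deriv (fun θ'' => N r θ'') θ') θ
        = 0 := by
  intro r θ hr _ _
  have hs2 : Real.sqrt (M ^ 2 - a ^ 2 - Q ^ 2) ^ 2 = M ^ 2 - a ^ 2 - Q ^ 2 :=
    Real.sq_sqrt (by linarith)
  have hsnn : 0 ≤ Real.sqrt (M ^ 2 - a ^ 2 - Q ^ 2) := Real.sqrt_nonneg _
  have hΔpos : ∀ r', M + Real.sqrt (M ^ 2 - a ^ 2 - Q ^ 2) < r' → 0 < Δ r' := by
    intro r' h'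
    rw [hΔ]
    nlinarith
  have hsq : Real.sqrt (Δ r) ≠ 0 := ne_of_gt (Real.sqrt_pos.2 (hΔpos r hr))
  -- θ term
  have hterm2 : (fun θ' => (Real.sqrt (Δ r))⁻¹ * deriv (fun θ'' => N r θ'') θ')
      = fun θ' => Real.cos θ' := by
    funext θ'
    have hfun : (fun θ'' => N r θ'') = fun θ'' => Real.sqrt (Δ r) * Real.sin θ'' := by
      funext x; rw [hN]
    rw [hfun, deriv_const_mul _ (Real.differentiable_sin.differentiableAt), Real.deriv_sin]
    field_simp
  have h2 : deriv (fun θ' => (Real.sqrt (Δ r))⁻¹ * deriv (fun θ'' => N r θ'') θ') θ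
      = - Real.sin θ := by
    rw [hterm2, Real.deriv_cos]
  -- r term
  have hΔdiff : ∀ r', HasDerivAt Δ (2 * r' - 2 * M) r' := by
    intro r'
    have hfun : Δ = fun r'' => r'' ^ 2 - 2 * M * r'' + a ^ 2 + Q ^ 2 := funext hΔ
    rw [hfun]
    have h1 := (((hasDerivAt_pow 2 r').sub
      ((hasDerivAt_id r').const_mul (2 * M))).add_const (a ^ 2)).add_const (Q ^ 2)
    have : ((2 : ℕ) : ℝ) * r' ^ 1 - 2 * M * 1 = 2 * r' - 2 * M := by push_cast; ring
    simpa [this] using h1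
  have hopen : IsOpen {r' : ℝ | 0 < Δ r'} := by
    have hc : Continuous Δ := by
      have hfun : Δ = fun r'' => r'' ^ 2 - 2 * M * r'' + a ^ 2 + Q ^ 2 := funext hΔ
      rw [hfun]; continuity
    exact isOpen_lt continuous_const hc
  have hev : (fun r' => Real.sqrt (Δ r') * deriv (fun r'' => N r'' θ) r')
      =ᶠ[nhds r] (fun r' => (r' - M) * Real.sin θ) := by
    filter_upwards [hopen.mem_nhds (hΔpos r hr)] with r' hΔ'
    have hsq' : Real.sqrt (Δ r') ≠ 0 := ne_of_gt (Real.sqrt_pos.2 hΔ')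
    have hfun : (fun r'' => N r'' θ) = fun r'' => Real.sqrt (Δ r'') * Real.sin θ := by
      funext x; rw [hN]
    have hD : HasDerivAt (fun r'' => Real.sqrt (Δ r''))
        ((2 * r' - 2 * M) / (2 * Real.sqrt (Δ r'))) r' :=
      (hΔdiff r').sqrt (ne_of_gt hΔ')
    have hDm : HasDerivAt (fun r'' => Real.sqrt (Δ r'') * Real.sin θ)
        ((2 * r' - 2 * M) / (2 * Real.sqrt (Δ r')) * Real.sin θ) r' := hD.mul_const _
    rw [hfun, hDm.deriv]
    field_simp
  have h1 : deriv (fun r' => Real.sqrt (Δ r') * deriv (fun r'' => N r'' θ) r') r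
      = Real.sin θ := by
    rw [hev.deriv_eq]
    have : HasDerivAt (fun r' : ℝ => (r' - M) * Real.sin θ) (1 * Real.sin θ) r :=
      ((hasDerivAt_id r).sub_const M).mul_const _
    simp [this.deriv]
  rw [h1, h2]; ring
end

section
/- Let R₊ > 0 and let k be a symmetric, traceless, divergence-free C² 2-tensor field with respect to the flat metric on {x ∈ ℝ² : |x| > R₊}, whose components are bounded and extend continuously to {|x| ≥ R₊} with k = 0 on the circle |x| = R₊. Then k ≡ 0. -/
/-! In two dimensions the divergence equations of a symmetric traceless tensor are exactly the
Cauchy–Riemann equations for `f = k₀₀ - i k₀₁`, so `f` is holomorphic on the exterior of the disk,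
bounded, and zero on the circle `|z| = R₊`. The maximum principle for `z⁻¹ f(z)` on the annuli
`R₊ < |z| < R` gives `|f z| ≤ |z| C / R`, and `R → ∞` forces `f = 0`. -/

/-- Partial derivative with respect to the first coordinate. -/
noncomputable def pd1 (f : ℝ × ℝ → ℝ) (p : ℝ × ℝ) : ℝ :=
  deriv (fun x => f (x, p.2)) p.1

/-- Partial derivative with respect to the second coordinate. -/
noncomputable def pd2 (f : ℝ × ℝ → ℝ) (p : ℝ × ℝ) : ℝ :=
  deriv (fun y => f (p.1, y)) p.2

open Complex Set Filter Topology Metric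

lemma pd1_eq_fderiv {u : ℝ × ℝ → ℝ} {p : ℝ × ℝ} (h : DifferentiableAt ℝ u p) :
    pd1 u p = fderiv ℝ u p (1, 0) :=
  (h.hasFDerivAt.comp_hasDerivAt p.1
    ((hasDerivAt_id p.1).prodMk (hasDerivAt_const _ p.2))).deriv

lemma pd2_eq_fderiv {u : ℝ × ℝ → ℝ} {p : ℝ × ℝ} (h : DifferentiableAt ℝ u p) :
    pd2 u p = fderiv ℝ u p (0, 1) :=
  (h.hasFDerivAt.comp_hasDerivAt p.2
    ((hasDerivAt_const _ p.1).prodMk (hasDerivAt_id p.2))).deriv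

lemma Filter.EventuallyEq.pd2_eq {u v : ℝ × ℝ → ℝ} {p : ℝ × ℝ} (h : u =ᶠ[𝓝 p] v) :
    pd2 u p = pd2 v p :=
  (h.comp_tendsto ((Continuous.prodMk_right p.1).tendsto p.2)).deriv_eq

lemma pd1_neg (u : ℝ × ℝ → ℝ) (p : ℝ × ℝ) : pd1 (fun q => -u q) p = -pd1 u p := deriv.neg

lemma pd2_neg (u : ℝ × ℝ → ℝ) (p : ℝ × ℝ) : pd2 (fun q => -u q) p = -pd2 u p := deriv.neg

theorem differentiableAt_complex_of_cauchyRiemann {u v : ℝ × ℝ → ℝ} {z : ℂ}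
    (hu : DifferentiableAt ℝ u (z.re, z.im)) (hv : DifferentiableAt ℝ v (z.re, z.im))
    (hx : pd1 u (z.re, z.im) = pd2 v (z.re, z.im))
    (hy : pd2 u (z.re, z.im) = -pd1 v (z.re, z.im)) :
    DifferentiableAt ℂ (fun w : ℂ => (u (w.re, w.im) + v (w.re, w.im) * I : ℂ)) z := by
  have hF : HasFDerivAt (fun w : ℂ => (u (w.re, w.im) + v (w.re, w.im) * I : ℂ))
      ((ofRealCLM.comp (fderiv ℝ u (z.re, z.im)) +
        I • ofRealCLM.comp (fderiv ℝ v (z.re, z.im))).comp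
        equivRealProdCLM.toContinuousLinearMap) z :=
    ((ofRealCLM.hasFDerivAt.comp _ hu.hasFDerivAt).add
      ((ofRealCLM.hasFDerivAt.comp _ hv.hasFDerivAt).mul_const I)).comp z
      equivRealProdCLM.hasFDerivAt
  rw [pd1_eq_fderiv hu, pd2_eq_fderiv hv] at hx
  rw [pd1_eq_fderiv hv, pd2_eq_fderiv hu] at hy
  rw [differentiableAt_complex_iff_differentiableAt_real, hF.fderiv]
  refine ⟨hF.differentiableAt, ?_⟩
  apply Complex.ext <;> simp [hx, hy]

section Exterior

variable {E : Type*} [NormedAddCommGroup E] [NormedSpace ℂ E] {f : ℂ → E} {r C : ℝ}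

lemma norm_inv_smul_le_of_annulus (hr : 0 < r) (hd : DifferentiableOn ℂ f {z | r < ‖z‖})
    (hc : ContinuousOn f {z | r ≤ ‖z‖}) (hb : ∀ z, r ≤ ‖z‖ → ‖f z‖ ≤ C)
    (h0 : ∀ z, ‖z‖ = r → f z = 0) {z : ℂ} (hz : r < ‖z‖) {R : ℝ} (hzR : ‖z‖ < R) :
    ‖z⁻¹ • f z‖ ≤ C / R := by
  set s : Set ℂ := {w | r < ‖w‖ ∧ ‖w‖ < R}
  have hs_open : IsOpen s :=
    (isOpen_lt continuous_const continuous_norm).inter (isOpen_lt continuous_norm continuous_const)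
  have hs_closure : closure s ⊆ {w | r ≤ ‖w‖ ∧ ‖w‖ ≤ R} :=
    closure_minimal (fun w hw => ⟨hw.1.le, hw.2.le⟩)
      ((isClosed_le continuous_const continuous_norm).inter
        (isClosed_le continuous_norm continuous_const))
  have hne : ∀ w ∈ closure s, w ≠ 0 := fun w hw =>
    norm_pos_iff.mp (hr.trans_le (hs_closure hw).1)
  have hg : DiffContOnCl ℂ (fun w => w⁻¹ • f w) s :=
    { differentiableOn := fun w hw =>
        ((differentiableAt_inv (hne w (subset_closure hw))).smul
          ((hd w hw.1).differentiableAt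
            ((isOpen_lt continuous_const continuous_norm).mem_nhds hw.1))).differentiableWithinAt
      continuousOn := (continuousOn_inv₀.mono hne).smul (hc.mono fun w hw => (hs_closure hw).1) }
  refine Complex.norm_le_of_forall_mem_frontier_norm_le
    ((isBounded_ball (x := (0 : ℂ)) (r := R)).subset fun w hw => by simpa using hw.2) hg
    (fun w hw => ?_) (subset_closure ⟨hz, hzR⟩)
  rw [hs_open.frontier_eq] at hw
  obtain ⟨hw_closure, hw_notMem⟩ := hw
  obtain ⟨hrw, hwR⟩ := hs_closure hw_closure
  have hw_pos : 0 < ‖w‖ := hr.trans_le hrw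
  rcases hrw.eq_or_lt with hrw | hrw
  · rw [h0 w hrw.symm, smul_zero, norm_zero]
    exact div_nonneg ((norm_nonneg _).trans (hb w hrw.le)) (hw_pos.trans_le hwR).le
  · have hRw : R ≤ ‖w‖ := not_lt.mp fun h => hw_notMem ⟨hrw, h⟩
    rw [norm_smul, norm_inv, inv_mul_eq_div]
    exact div_le_div₀ ((norm_nonneg _).trans (hb w hrw.le)) (hb w hrw.le) (hw_pos.trans_le hwR) hRw

theorem eq_zero_of_bounded_of_eq_zero_on_sphere (hr : 0 < r)
    (hd : DifferentiableOn ℂ f {z | r < ‖z‖}) (hc : ContinuousOn f {z | r ≤ ‖z‖})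
    (hb : ∀ z, r ≤ ‖z‖ → ‖f z‖ ≤ C) (h0 : ∀ z, ‖z‖ = r → f z = 0) {z : ℂ} (hz : r < ‖z‖) :
    f z = 0 := by
  have hle : ‖z⁻¹ • f z‖ ≤ 0 :=
    ge_of_tendsto (tendsto_const_nhds.div_atTop tendsto_id)
      ((eventually_gt_atTop ‖z‖).mono fun R hR => norm_inv_smul_le_of_annulus hr hd hc hb h0 hz hR)
  simpa [norm_pos_iff.mp (hr.trans hz)] using hle

end Exterior

lemma sq_norm_eq_re_sq_add_im_sq (z : ℂ) : ‖z‖ ^ 2 = z.re ^ 2 + z.im ^ 2 := by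
  rw [Complex.sq_norm, Complex.normSq_apply]; ring

lemma lt_norm_iff_sq_lt {r : ℝ} (hr : 0 ≤ r) (z : ℂ) :
    r < ‖z‖ ↔ r ^ 2 < z.re ^ 2 + z.im ^ 2 := by
  rw [← sq_norm_eq_re_sq_add_im_sq, pow_lt_pow_iff_left₀ hr (norm_nonneg z) two_ne_zero]

lemma le_norm_iff_sq_le {r : ℝ} (hr : 0 ≤ r) (z : ℂ) :
    r ≤ ‖z‖ ↔ r ^ 2 ≤ z.re ^ 2 + z.im ^ 2 := by
  rw [← sq_norm_eq_re_sq_add_im_sq, pow_le_pow_iff_left₀ hr (norm_nonneg z) two_ne_zero]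

noncomputable def tensorComplex (k : ℝ × ℝ → Matrix (Fin 2) (Fin 2) ℝ) (w : ℂ) : ℂ :=
  k (w.re, w.im) 0 0 + (-k (w.re, w.im) 0 1 : ℝ) * I

@[simp]
lemma tensorComplex_re (k : ℝ × ℝ → Matrix (Fin 2) (Fin 2) ℝ) (w : ℂ) :
    (tensorComplex k w).re = k (w.re, w.im) 0 0 := by
  simp [tensorComplex]

@[simp]
lemma tensorComplex_im (k : ℝ × ℝ → Matrix (Fin 2) (Fin 2) ℝ) (w : ℂ) :
    (tensorComplex k w).im = -k (w.re, w.im) 0 1 := by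
  simp [tensorComplex]

lemma norm_tensorComplex_le (k : ℝ × ℝ → Matrix (Fin 2) (Fin 2) ℝ) (w : ℂ) :
    ‖tensorComplex k w‖ ≤ |k (w.re, w.im) 0 0| + |k (w.re, w.im) 0 1| :=
  (norm_add_le _ _).trans_eq (by simp)

lemma continuousOn_tensorComplex {k : ℝ × ℝ → Matrix (Fin 2) (Fin 2) ℝ} {S : Set (ℝ × ℝ)}
    (hk : ∀ i j, ContinuousOn (fun p => k p i j) S) :
    ContinuousOn (tensorComplex k) {w | (w.re, w.im) ∈ S} := by
  have hk' : ∀ i j, ContinuousOn (fun w : ℂ => k (w.re, w.im) i j) {w | (w.re, w.im) ∈ S} :=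
    fun i j => (hk i j).comp (by fun_prop) fun _ hw => hw
  exact (continuous_ofReal.comp_continuousOn (hk' 0 0)).add
    ((continuous_ofReal.comp_continuousOn (hk' 0 1).neg).mul continuousOn_const)

lemma differentiableAt_tensorComplex {k : ℝ × ℝ → Matrix (Fin 2) (Fin 2) ℝ} {z : ℂ}
    (hk : ∀ i j, DifferentiableAt ℝ (fun q => k q i j) (z.re, z.im))
    (hsym : ∀ᶠ q in 𝓝 (z.re, z.im), k q 0 1 = k q 1 0)
    (htr : ∀ᶠ q in 𝓝 (z.re, z.im), k q 0 0 + k q 1 1 = 0)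
    (hdiv : ∀ j : Fin 2,
      pd1 (fun q => k q 0 j) (z.re, z.im) + pd2 (fun q => k q 1 j) (z.re, z.im) = 0) :
    DifferentiableAt ℂ (tensorComplex k) z := by
  have h10 : pd2 (fun q => k q 1 0) (z.re, z.im) = pd2 (fun q => k q 0 1) (z.re, z.im) :=
    Filter.EventuallyEq.pd2_eq (hsym.mono fun q h => h.symm)
  have h11 : pd2 (fun q => k q 1 1) (z.re, z.im) = pd2 (fun q => -k q 0 0) (z.re, z.im) :=
    Filter.EventuallyEq.pd2_eq (htr.mono fun q h => by linarith)
  have hdiv0 := hdiv 0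
  have hdiv1 := hdiv 1
  rw [h10] at hdiv0
  rw [h11, pd2_neg] at hdiv1
  refine differentiableAt_complex_of_cauchyRiemann (v := fun q => -k q 0 1) (hk 0 0) (hk 0 1).neg
    ?_ ?_
  · rw [pd2_neg]; linarith
  · rw [pd1_neg, neg_neg]; linarith

lemma Matrix.eq_zero_of_symm_of_traceless {A : Matrix (Fin 2) (Fin 2) ℝ} (hsym : A 0 1 = A 1 0)
    (htr : A 0 0 + A 1 1 = 0) (h00 : A 0 0 = 0) (h01 : A 0 1 = 0) : A = 0 := by
  ext i j
  fin_cases i <;> fin_cases j <;>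
    simp only [Fin.zero_eta, Fin.mk_one, Matrix.zero_apply] <;> linarith

/-- A bounded transverse-traceless (symmetric, traceless, divergence-free) C²
2-tensor field on the exterior {|x| > R₊} of a disk in the flat plane, extending
continuously to the boundary circle where it vanishes, vanishes identically. -/
theorem tt_tensor_exterior_vanishes (Rp : ℝ) (hRp : 0 < Rp)
    (k : ℝ × ℝ → Matrix (Fin 2) (Fin 2) ℝ)
    (hsym : ∀ p : ℝ × ℝ, Rp ^ 2 < p.1 ^ 2 + p.2 ^ 2 → k p 0 1 = k p 1 0)
    (htr : ∀ p : ℝ × ℝ, Rp ^ 2 < p.1 ^ 2 + p.2 ^ 2 → k p 0 0 + k p 1 1 = 0)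
    (hdiv : ∀ p : ℝ × ℝ, Rp ^ 2 < p.1 ^ 2 + p.2 ^ 2 → ∀ j : Fin 2,
      pd1 (fun q => k q 0 j) p + pd2 (fun q => k q 1 j) p = 0)
    (hC2 : ∀ i j : Fin 2,
      ContDiffOn ℝ 2 (fun p => k p i j) {p : ℝ × ℝ | Rp ^ 2 < p.1 ^ 2 + p.2 ^ 2})
    (hcont : ∀ i j : Fin 2,
      ContinuousOn (fun p => k p i j) {p : ℝ × ℝ | Rp ^ 2 ≤ p.1 ^ 2 + p.2 ^ 2})
    (hbdd : ∃ Cb : ℝ, ∀ i j : Fin 2, ∀ p : ℝ × ℝ,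
      Rp ^ 2 ≤ p.1 ^ 2 + p.2 ^ 2 → |k p i j| ≤ Cb)
    (hbc : ∀ p : ℝ × ℝ, p.1 ^ 2 + p.2 ^ 2 = Rp ^ 2 → k p = 0) :
    ∀ p : ℝ × ℝ, Rp ^ 2 ≤ p.1 ^ 2 + p.2 ^ 2 → k p = 0 := by
  obtain ⟨C, hC⟩ := hbdd
  have hU : IsOpen {p : ℝ × ℝ | Rp ^ 2 < p.1 ^ 2 + p.2 ^ 2} :=
    isOpen_lt continuous_const (by fun_prop)
  have hdiff : DifferentiableOn ℂ (tensorComplex k) {z | Rp < ‖z‖} := fun z hz => by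
    have hp : Rp ^ 2 < z.re ^ 2 + z.im ^ 2 := (lt_norm_iff_sq_lt hRp.le z).mp hz
    have hn := hU.mem_nhds (show (z.re, z.im) ∈ _ from hp)
    exact (differentiableAt_tensorComplex
      (fun i j => ((hC2 i j).contDiffAt hn).differentiableAt two_ne_zero)
      (eventually_of_mem hn hsym) (eventually_of_mem hn htr) (hdiv _ hp)).differentiableWithinAt
  have hcont' : ContinuousOn (tensorComplex k) {z | Rp ≤ ‖z‖} :=
    (continuousOn_tensorComplex hcont).mono fun z hz => (le_norm_iff_sq_le hRp.le z).mp hz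
  have hbound : ∀ z, Rp ≤ ‖z‖ → ‖tensorComplex k z‖ ≤ C + C := fun z hz =>
    have hp := (le_norm_iff_sq_le hRp.le z).mp hz
    (norm_tensorComplex_le k z).trans (add_le_add (hC 0 0 _ hp) (hC 0 1 _ hp))
  have hzero : ∀ z, ‖z‖ = Rp → tensorComplex k z = 0 := fun z hz => by
    simp [tensorComplex, hbc (z.re, z.im) (by rw [← sq_norm_eq_re_sq_add_im_sq, hz])]
  intro p hp
  rcases hp.lt_or_eq with hlt | heq
  · have h := eq_zero_of_bounded_of_eq_zero_on_sphere hRp hdiff hcont' hbound hzero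
      ((lt_norm_iff_sq_lt hRp.le ⟨p.1, p.2⟩).mpr hlt)
    exact Matrix.eq_zero_of_symm_of_traceless (hsym p hlt) (htr p hlt)
      (by simpa using congrArg re h) (by simpa using congrArg im h)
  · exact hbc p heq.symm
end

section
/- Fix an integer m ≥ 1, R₊ > 0, and R₊ < R₁ ≤ R₂ < ∞. Let σ : [R₊,∞) → ℝ be continuous with support contained in [R₁, R₂]. Then there exists a solution ψ of ψ''(R) + ψ'(R)/R − m²ψ(R)/R² = σ(R) on [R₊,∞) that vanishes identically on [R₊, R₁] and on [R₂, ∞) if and only if ∫_{R₁}^{R₂} R^{1−m} σ(R) dR = 0 and ∫_{R₁}^{R₂} R^{1+m} σ(R) dR = 0. -/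
open MeasureTheory intervalIntegral

open Set Filter Topology Function

/-!
Both directions rest on the homogeneous solutions `R ^ (± m)` of
`L ψ = ψ'' + ψ' / R - m² ψ / R²`. For `k = ± m` one has
`(R ^ (k + 1) ψ' - k R ^ k ψ)' = R ^ (k + 1) L ψ`, so integrating over `[R₁, R₂]` a solution whose
Cauchy data vanish at both ends gives the two moment conditions. Conversely, variation of
parameters gives the solution `(R ^ m B - R ^ (-m) A) / (2m)` with `B, A` the primitives of
`R ^ (1 - m) σ, R ^ (1 + m) σ` from `R₁`; it vanishes below `R₁`, and above `R₂` exactly when both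
moments do.
-/

section Support

variable {α E : Type*} [TopologicalSpace α] [LinearOrder α] [OrderTopology α] [DenselyOrdered α]
  [TopologicalSpace E] [T2Space E] [Zero E] {f : α → E} {a b : α}

theorem Continuous.eqOn_zero_Iic_of_support_subset_Icc [NoMinOrder α] (hf : Continuous f)
    (hsupp : support f ⊆ Icc a b) : EqOn f 0 (Iic a) := by
  have hIio : EqOn f 0 (Iio a) := fun x hx ↦ by_contra fun h ↦ not_le.2 hx (hsupp h).1
  simpa [closure_Iio' nonempty_Iio] using hIio.closure hf continuous_const

theorem Continuous.eqOn_zero_Ici_of_support_subset_Icc [NoMaxOrder α] (hf : Continuous f)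
    (hsupp : support f ⊆ Icc a b) : EqOn f 0 (Ici b) := by
  have hIoi : EqOn f 0 (Ioi b) := fun x hx ↦ by_contra fun h ↦ not_le.2 hx (hsupp h).2
  simpa [closure_Ioi' nonempty_Ioi] using hIoi.closure hf continuous_const

end Support

theorem integral_eq_zero_of_support_subset_Icc {E : Type*} [NormedAddCommGroup E]
    [NormedSpace ℝ E] {f : ℝ → E} {a b x : ℝ} (hf : Continuous f) (hsupp : support f ⊆ Icc a b)
    (hint : ∫ t in a..b, f t = 0) (hx : x ∉ Ioo a b) : ∫ t in a..x, f t = 0 := by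
  have hzero : ∀ {c d : ℝ}, EqOn f 0 (uIcc c d) → ∫ t in c..d, f t = 0 := fun h ↦ by
    simp [integral_congr h]
  rcases le_or_gt x a with hxa | hax
  · exact hzero ((hf.eqOn_zero_Iic_of_support_subset_Icc hsupp).mono
      (uIcc_comm a x ▸ uIcc_of_le hxa ▸ Icc_subset_Iic_self))
  · have hbx : b ≤ x := not_lt.1 fun hxb ↦ hx ⟨hax, hxb⟩
    rw [← integral_add_adjacent_intervals (hf.intervalIntegrable a b) (hf.intervalIntegrable b x),
      hint, hzero ((hf.eqOn_zero_Ici_of_support_subset_Icc hsupp).mono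
        (uIcc_of_le hbx ▸ Icc_subset_Ici_self)), add_zero]

theorem continuous_zpow_mul_of_eventuallyEq_zero {𝕜 : Type*} [NontriviallyNormedField 𝕜]
    {σ : 𝕜 → 𝕜} (hσ : Continuous σ) (h0 : σ =ᶠ[𝓝 0] 0) (k : ℤ) :
    Continuous fun s ↦ s ^ k * σ s := by
  refine continuous_iff_continuousAt.2 fun x ↦ ?_
  rcases eq_or_ne x 0 with rfl | hx
  · refine (EventuallyEq.continuousAt (y := 0) ?_)
    filter_upwards [h0] with s hs
    simp [hs]
  · exact (continuousAt_zpow₀ x k (Or.inl hx)).mul hσ.continuousAt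

theorem HasDerivWithinAt.eq_zero_of_eqOn_zero {𝕜 F : Type*} [NontriviallyNormedField 𝕜]
    [NormedAddCommGroup F] [NormedSpace 𝕜 F] {f : 𝕜 → F} {f' : F} {s : Set 𝕜} {x : 𝕜}
    (h : HasDerivWithinAt f f' s x) (hs : UniqueDiffWithinAt 𝕜 s x) (hf : EqOn f 0 s)
    (hx : x ∈ s) : f' = 0 :=
  hs.eq_deriv s h ((hasDerivWithinAt_const x s 0).congr hf (hf hx))

theorem hasDerivAt_zpow_wronskian {k : ℤ} {c : ℝ} (hk : (k : ℝ) ^ 2 = c) {ψ ψ' : ℝ → ℝ}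
    {x s : ℝ} (hx : x ≠ 0) (hψ : HasDerivAt ψ (ψ' x) x)
    (hψ' : HasDerivAt ψ' (s - ψ' x / x + c * ψ x / x ^ 2) x) :
    HasDerivAt (fun R ↦ R ^ (k + 1) * ψ' R - k * R ^ k * ψ R) (x ^ (k + 1) * s) x := by
  have hpow : ∀ j : ℤ, HasDerivAt (fun R : ℝ ↦ R ^ j) (j * x ^ (j - 1)) x :=
    fun j ↦ hasDerivAt_zpow j x (Or.inl hx)
  refine (((hpow (k + 1)).mul hψ').sub (((hpow k).const_mul (k : ℝ)).mul hψ)).congr_deriv ?_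
  simp only [zpow_add_one₀ hx, zpow_sub_one₀ hx, add_sub_cancel_right, ← hk]
  push_cast
  field_simp
  ring

theorem integral_zpow_mul_eq_zero_of_hasDerivWithinAt {k : ℤ} {c : ℝ} (hk : (k : ℝ) ^ 2 = c)
    {Rp a b : ℝ} (hRp : 0 < Rp) (ha : Rp < a) (hab : a ≤ b) {σ ψ ψ' : ℝ → ℝ}
    (hσ : Continuous fun R ↦ R ^ (k + 1) * σ R)
    (hψ : ∀ R, Rp ≤ R → HasDerivWithinAt ψ (ψ' R) (Ici Rp) R)
    (hψ' : ∀ R, Rp ≤ R → HasDerivWithinAt ψ' (σ R - ψ' R / R + c * ψ R / R ^ 2) (Ici Rp) R)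
    (hleft : ∀ R ∈ Icc Rp a, ψ R = 0) (hright : ∀ R, b ≤ R → ψ R = 0) :
    ∫ R in a..b, R ^ (k + 1) * σ R = 0 := by
  have hψa : ψ a = 0 := hleft a ⟨ha.le, le_rfl⟩
  have hψb : ψ b = 0 := hright b le_rfl
  have hψ'a : ψ' a = 0 :=
    ((hψ a ha.le).mono Icc_subset_Ici_self).eq_zero_of_eqOn_zero
      (uniqueDiffOn_Icc ha a ⟨ha.le, le_rfl⟩) hleft ⟨ha.le, le_rfl⟩
  have hψ'b : ψ' b = 0 :=
    ((hψ b (ha.le.trans hab)).mono (Ici_subset_Ici.2 (ha.le.trans hab))).eq_zero_of_eqOn_zero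
      (uniqueDiffWithinAt_Ici b) hright self_mem_Ici
  have hwronskian : ∀ x ∈ uIcc a b,
      HasDerivAt (fun R ↦ R ^ (k + 1) * ψ' R - k * R ^ k * ψ R) (x ^ (k + 1) * σ x) x := by
    intro x hx
    have hRpx : Rp < x := ha.trans_le (uIcc_of_le hab ▸ hx).1
    have hnhds : Ici Rp ∈ 𝓝 x := Ici_mem_nhds hRpx
    exact hasDerivAt_zpow_wronskian hk (hRp.trans hRpx).ne' ((hψ x hRpx.le).hasDerivAt hnhds)
      ((hψ' x hRpx.le).hasDerivAt hnhds)
  rw [integral_eq_sub_of_hasDerivAt hwronskian (hσ.intervalIntegrable a b)]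
  simp [hψa, hψb, hψ'a, hψ'b]

section RadialSolution

variable (m : ℕ) (A B : ℝ → ℝ)

noncomputable def radialSolution (R : ℝ) : ℝ :=
  (R ^ (m : ℤ) * B R - R ^ (-(m : ℤ)) * A R) / (2 * m)

noncomputable def radialSolutionDeriv (R : ℝ) : ℝ :=
  (R ^ ((m : ℤ) - 1) * B R + R ^ (-(m : ℤ) - 1) * A R) / 2

variable {m A B} {x s : ℝ}

theorem hasDerivAt_radialSolution (hm : m ≠ 0) (hx : x ≠ 0)
    (hB : HasDerivAt B (x ^ (1 - (m : ℤ)) * s) x) (hA : HasDerivAt A (x ^ (1 + (m : ℤ)) * s) x) :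
    HasDerivAt (radialSolution m A B) (radialSolutionDeriv m A B x) x := by
  have hpow : ∀ j : ℤ, HasDerivAt (fun R : ℝ ↦ R ^ j) (j * x ^ (j - 1)) x :=
    fun j ↦ hasDerivAt_zpow j x (Or.inl hx)
  refine ((((hpow m).mul hB).sub ((hpow (-m)).mul hA)).div_const (2 * (m : ℝ))).congr_deriv ?_
  simp only [radialSolutionDeriv, zpow_sub₀ hx, zpow_add₀ hx, zpow_neg, zpow_one, zpow_natCast]
  push_cast
  field_simp
  ring

theorem hasDerivAt_radialSolutionDeriv (hx : x ≠ 0)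
    (hB : HasDerivAt B (x ^ (1 - (m : ℤ)) * s) x) (hA : HasDerivAt A (x ^ (1 + (m : ℤ)) * s) x) :
    HasDerivAt (radialSolutionDeriv m A B)
      (s - radialSolutionDeriv m A B x / x + (m : ℝ) ^ 2 * radialSolution m A B x / x ^ 2) x := by
  have hpow : ∀ j : ℤ, HasDerivAt (fun R : ℝ ↦ R ^ j) (j * x ^ (j - 1)) x :=
    fun j ↦ hasDerivAt_zpow j x (Or.inl hx)
  refine ((((hpow (m - 1)).mul hB).add ((hpow (-m - 1)).mul hA)).div_const 2).congr_deriv ?_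
  simp only [radialSolution, radialSolutionDeriv, zpow_sub₀ hx, zpow_add₀ hx, zpow_neg, zpow_one,
    zpow_natCast]
  push_cast
  field_simp
  ring

end RadialSolution

/-- For a continuous source σ supported in [R₁,R₂] ⊂ (R₊,∞), the equation
ψ'' + ψ'/R − m²ψ/R² = σ admits a solution on [R₊,∞) vanishing identically on
[R₊,R₁] and on [R₂,∞) iff ∫ R^{1−m} σ = 0 and ∫ R^{1+m} σ = 0. -/
theorem compactly_supported_solution_iff_integral_conditions
    (m : ℕ) (hm : 1 ≤ m) (Rp R₁ R₂ : ℝ)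
    (hRp : 0 < Rp) (h₁ : Rp < R₁) (h₁₂ : R₁ ≤ R₂)
    (σ : ℝ → ℝ) (hσ : Continuous σ)
    (hsupp : ∀ t : ℝ, σ t ≠ 0 → t ∈ Set.Icc R₁ R₂) :
    (∃ ψ ψ' : ℝ → ℝ,
        (∀ R, Rp ≤ R → HasDerivWithinAt ψ (ψ' R) (Set.Ici Rp) R) ∧
        (∀ R, Rp ≤ R → HasDerivWithinAt ψ'
          (σ R - ψ' R / R + (m : ℝ) ^ 2 * ψ R / R ^ 2) (Set.Ici Rp) R) ∧
        (∀ R ∈ Set.Icc Rp R₁, ψ R = 0) ∧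
        (∀ R, R₂ ≤ R → ψ R = 0))
      ↔ ((∫ R in R₁..R₂, R ^ ((1 : ℤ) - (m : ℤ)) * σ R) = 0 ∧
         (∫ R in R₁..R₂, R ^ ((1 : ℤ) + (m : ℤ)) * σ R) = 0) := by
  have hσ0 : σ =ᶠ[𝓝 0] 0 := by
    filter_upwards [Iio_mem_nhds (hRp.trans h₁)] with t ht
    exact hσ.eqOn_zero_Iic_of_support_subset_Icc hsupp (Iio_subset_Iic_self ht)
  have hcont := continuous_zpow_mul_of_eventuallyEq_zero hσ hσ0
  constructor
  · rintro ⟨ψ, ψ', hψ, hψ', hleft, hright⟩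
    have hmoment := fun (k : ℤ) (hk : (k : ℝ) ^ 2 = (m : ℝ) ^ 2) ↦
      integral_zpow_mul_eq_zero_of_hasDerivWithinAt hk hRp h₁ h₁₂ (hcont _) hψ hψ' hleft hright
    constructor
    · simpa [neg_add_eq_sub] using hmoment (-m) (by push_cast; ring)
    · simpa [add_comm] using hmoment m rfl
  · rintro ⟨hB, hA⟩
    set B := fun x ↦ ∫ t in R₁..x, t ^ ((1 : ℤ) - m) * σ t
    set A := fun x ↦ ∫ t in R₁..x, t ^ ((1 : ℤ) + m) * σ t
    have hprimitive (k : ℤ) (x : ℝ) : HasDerivAt (fun x ↦ ∫ t in R₁..x, t ^ k * σ t)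
        (x ^ k * σ x) x :=
      ((hcont k).integral_hasStrictDerivAt R₁ x).hasDerivAt
    have hvanish (k : ℤ) (hk : ∫ t in R₁..R₂, t ^ k * σ t = 0) (x : ℝ) (hx : x ∉ Ioo R₁ R₂) :
        ∫ t in R₁..x, t ^ k * σ t = 0 :=
      integral_eq_zero_of_support_subset_Icc (hcont k)
        ((support_mul_subset_right _ _).trans hsupp) hk hx
    have hsolution_zero (R : ℝ) (hR : R ∉ Ioo R₁ R₂) : radialSolution m A B R = 0 := by
      simp [radialSolution, B, A, hvanish _ hB R hR, hvanish _ hA R hR]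
    refine ⟨radialSolution m A B, radialSolutionDeriv m A B, fun R hR ↦ ?_, fun R hR ↦ ?_,
      fun R hR ↦ ?_, fun R hR ↦ ?_⟩
    · exact (hasDerivAt_radialSolution (by omega) (hRp.trans_le hR).ne' (hprimitive _ R)
        (hprimitive _ R)).hasDerivWithinAt
    · exact (hasDerivAt_radialSolutionDeriv (hRp.trans_le hR).ne' (hprimitive _ R)
        (hprimitive _ R)).hasDerivWithinAt
    · exact hsolution_zero R fun h ↦ not_lt.2 hR.2 h.1
    · exact hsolution_zero R fun h ↦ not_lt.2 hR h.2
end
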